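/- arXiv:2008.07080 — 2 statements merged into one kernel-verified Lean document; each statement's English description precedes it below -/
import Mathlib

section
/- Assume (B1)–(B3) and fix λ > 0, σ ∈ (0,1), c > 0, z⁻ ∈ H, p⁻ ∈ ℝ^ℓ. Set L^ψ := λ(L_f + L_g‖p⁻‖ + c(B_g^{(0)}L_g + (B_g^{(1)})²)) + 1 and σ' := σ/√(L^ψ). Suppose (z, v, ε) ∈ H × ℝ^n × ℝ_+ satisfies v ∈ ∂_ε(λ L_c(·;p⁻) + (1/2)‖·−z⁻‖²)(z) and ‖v‖² + 2ε ≤ (σ')²‖v + z⁻ − z‖². Define r := v + z⁻ − z, δ := ε/λ, p := Π_{K*}(p⁻ + c g(z)), ẑ := argmin_u {λ(⟨∇f(z) + ∇g(z)p, u−z⟩ + h(u)) − ⟨r, u−z⟩ + (L^ψ/2)‖u−z‖²}, and w := (r + L^ψ(z − ẑ))/λ. Then w ∈ ∇f(z) + ∂_δ h(z) + ∇g(z)p, ‖w‖ ≤ (1/λ)(1 + σ'√(L^ψ))‖r‖, and δ ≤ (σ')²‖r‖²/(2λ). -/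
open RealInnerProductSpace Pointwise

/-- The dual cone of a set in a real inner product space. -/
def dualCone {F : Type*} [NormedAddCommGroup F] [InnerProductSpace ℝ F] (K : Set F) : Set F :=
  {y | ∀ x ∈ K, 0 ≤ ⟪y, x⟫}

/-- `p` is the Euclidean projection of `x` onto `S`. -/
def IsProjOn {F : Type*} [NormedAddCommGroup F] [InnerProductSpace ℝ F]
    (S : Set F) (x p : F) : Prop :=
  p ∈ S ∧ ∀ y ∈ S, dist x p ≤ dist x y

/-- `g` is `K`-convex. -/
def KConvex {E F : Type*} [NormedAddCommGroup E] [InnerProductSpace ℝ E]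
    [NormedAddCommGroup F] [InnerProductSpace ℝ F] (K : Set F) (g : E → F) : Prop :=
  ∀ z z' : E, ∀ t : ℝ, t ∈ Set.Icc (0 : ℝ) 1 →
    g (t • z' + (1 - t) • z) - t • g z' - (1 - t) • g z ∈ -K

/-- The ε-subdifferential at `z` of a proper extended-real-valued function represented by
its effective domain `D` and its real values `ψ` on `D` (the function equals `+∞` off `D`). -/
def epsSubdiff {E : Type*} [NormedAddCommGroup E] [InnerProductSpace ℝ E]
    (D : Set E) (ψ : E → ℝ) (ε : ℝ) (z : E) : Set E :=
  {u | ∀ z' ∈ D, ψ z + ⟪u, z' - z⟫ - ε ≤ ψ z'}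

/-- The augmented Lagrangian `L_c(z;p)`; the proper closed convex function `h` is represented
by its real values on its effective domain `H`. -/
noncomputable def AugLag {E F : Type*} [NormedAddCommGroup E] [InnerProductSpace ℝ E]
    [NormedAddCommGroup F] [InnerProductSpace ℝ F]
    (K : Set F) (f h : E → ℝ) (g : E → F) (c : ℝ) (z : E) (p : F) : ℝ :=
  f z + h z + (1 / (2 * c)) * ((Metric.infDist (p + c • g z) (-K)) ^ 2 - ‖p‖ ^ 2)

/-!
The smooth part `Φ = λ (f + dist² (p⁻ + c g(·), -K) / (2c)) + ½‖· - z⁻‖²` of the prox objective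
has gradient `λ (∇f + ∇g Π_{K*}(p⁻ + c g)) + (· - z⁻)` (by Moreau's decomposition), which is
`L^ψ`-Lipschitz on `H`. The descent lemma turns the ε-subgradient inequality, tested at `ẑ`, into
`φ z ≤ φ ẑ + (L^ψ/2)‖ẑ - z‖² + ε` for the convex model `φ = λ (⟨∇f(z) + ∇g(z) p, · - z⟩ + h) - ⟨r, · - z⟩`,
of which `ẑ` is the proximal point at `z`. Together with the first-order optimality of `ẑ` this
gives `L^ψ (z - ẑ) ∈ ∂_ε φ(z)`, i.e. the inclusion for `w` after dividing by `λ`, and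
`L^ψ ‖ẑ - z‖² ≤ 2ε ≤ σ'² ‖r‖²`, which yields both bounds.
-/

section Projection

variable {F : Type*} [NormedAddCommGroup F] [InnerProductSpace ℝ F] {S : Set F} {x y p q : F}

theorem isProjOn_iff_inner_le_zero (hS : Convex ℝ S) :
    IsProjOn S x p ↔ p ∈ S ∧ ∀ y ∈ S, ⟪x - p, y - p⟫ ≤ 0 := by
  constructor
  · intro hp
    have : Nonempty S := ⟨⟨p, hp.1⟩⟩
    refine ⟨hp.1, (norm_eq_iInf_iff_real_inner_le_zero hS hp.1).1 ?_⟩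
    exact le_antisymm (le_ciInf fun w => by simpa only [dist_eq_norm] using hp.2 w w.2)
      (ciInf_le (f := fun w : S => ‖x - w‖) ⟨0, by rintro _ ⟨w, rfl⟩; positivity⟩ ⟨p, hp.1⟩)
  · rintro ⟨hpS, hobtuse⟩
    refine ⟨hpS, fun y hy => ?_⟩
    have hexp : ‖x - y‖ ^ 2 = ‖x - p‖ ^ 2 - 2 * ⟪x - p, y - p⟫ + ‖y - p‖ ^ 2 := by
      rw [show x - y = (x - p) - (y - p) by abel, norm_sub_sq_real]
    rw [dist_eq_norm, dist_eq_norm, ← pow_le_pow_iff_left₀ (norm_nonneg _) (norm_nonneg _)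
      two_ne_zero]
    nlinarith [hobtuse y hy, sq_nonneg ‖y - p‖]

theorem IsProjOn.infDist_eq (hp : IsProjOn S x p) : Metric.infDist x S = dist x p :=
  le_antisymm (Metric.infDist_le_dist_of_mem hp.1) ((Metric.le_infDist ⟨p, hp.1⟩).2 hp.2)

theorem IsProjOn.norm_sub_le (hS : Convex ℝ S) (hp : IsProjOn S x p) (hq : IsProjOn S y q) :
    ‖p - q‖ ≤ ‖x - y‖ := by
  have hpq := ((isProjOn_iff_inner_le_zero hS).1 hp).2 q hq.1
  have hqp := ((isProjOn_iff_inner_le_zero hS).1 hq).2 p hp.1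
  have hsplit : ⟪x - y, p - q⟫ = ‖p - q‖ ^ 2 - ⟪x - p, q - p⟫ - ⟪y - q, p - q⟫ := by
    rw [← real_inner_self_eq_norm_sq, show q - p = -(p - q) by abel, inner_neg_right,
      show x - y = (p - q) + (x - p) - (y - q) by abel, inner_sub_left, inner_add_left]
    ring
  nlinarith [real_inner_le_norm (x - y) (p - q), norm_nonneg (p - q), norm_nonneg (x - y)]

theorem IsProjOn.eq (hS : Convex ℝ S) (hp : IsProjOn S x p) (hq : IsProjOn S x q) : p = q :=
  sub_eq_zero.1 (norm_le_zero_iff.1 (by simpa using hp.norm_sub_le hS hq))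

theorem IsProjOn.norm_le (hS : Convex ℝ S) (h0 : (0 : F) ∈ S) (hp : IsProjOn S x p) :
    ‖p‖ ≤ ‖x‖ := by
  simpa using hp.norm_sub_le hS (y := 0) (q := 0) ⟨h0, fun y _ => by simp⟩

theorem IsClosed.exists_isProjOn [ProperSpace F] (hS : IsClosed S) (hne : S.Nonempty) (x : F) :
    ∃ p, IsProjOn S x p := by
  obtain ⟨p, hpS, hp⟩ := hS.exists_infDist_eq_dist hne x
  exact ⟨p, hpS, fun y hy => hp ▸ Metric.infDist_le_dist_of_mem hy⟩

theorem IsProjOn.infDist_sq_le (hp : IsProjOn S x p) (u : F) :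
    Metric.infDist u S ^ 2 ≤ Metric.infDist x S ^ 2 + ⟪(2 : ℝ) • (x - p), u - x⟫ + ‖u - x‖ ^ 2 := by
  have hu : Metric.infDist u S ≤ ‖(u - x) + (x - p)‖ := by
    rw [sub_add_sub_cancel, ← dist_eq_norm]
    exact Metric.infDist_le_dist_of_mem hp.1
  rw [hp.infDist_eq, dist_eq_norm, real_inner_smul_left, real_inner_comm]
  nlinarith [norm_add_sq_real (u - x) (x - p), Metric.infDist_nonneg (x := u) (s := S)]

theorem IsProjOn.le_infDist_sq (hS : Convex ℝ S) (hp : IsProjOn S x p) (hq : IsProjOn S u q) :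
    Metric.infDist x S ^ 2 + ⟪(2 : ℝ) • (x - p), u - x⟫ ≤ Metric.infDist u S ^ 2 := by
  have hobtuse := ((isProjOn_iff_inner_le_zero hS).1 hp).2 q hq.1
  have hexp : ‖u - q‖ ^ 2 = ‖(u - x) + (p - q)‖ ^ 2 + 2 * ⟪(u - x) + (p - q), x - p⟫
      + ‖x - p‖ ^ 2 := by
    rw [← norm_add_sq_real]; congr 2; abel
  have hpq : ⟪p - q, x - p⟫ = -⟪x - p, q - p⟫ := by
    rw [real_inner_comm, show p - q = -(q - p) by abel, inner_neg_right]
  rw [hp.infDist_eq, hq.infDist_eq, dist_eq_norm, dist_eq_norm, real_inner_smul_left,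
    real_inner_comm]
  rw [inner_add_left, hpq] at hexp
  nlinarith [sq_nonneg ‖(u - x) + (p - q)‖]

theorem hasGradientAt_infDist_sq [CompleteSpace F] (hS : Convex ℝ S) {P : F → F}
    (hP : ∀ y, IsProjOn S y (P y)) (x : F) :
    HasGradientAt (fun y => Metric.infDist y S ^ 2) ((2 : ℝ) • (x - P x)) x := by
  rw [hasGradientAt_iff_isLittleO_nhds_zero]
  refine Asymptotics.IsBigO.trans_isLittleO ?_ (Asymptotics.isLittleO_norm_pow_id one_lt_two)
  refine Asymptotics.IsBigO.of_bound 1 (Filter.Eventually.of_forall fun v => ?_)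
  have hup := (hP x).infDist_sq_le (x + v)
  have hlow := (hP x).le_infDist_sq hS (hP (x + v))
  rw [add_sub_cancel_left] at hup hlow
  rw [Real.norm_eq_abs, abs_le, norm_pow, norm_norm, one_mul]
  constructor <;> linarith [sq_nonneg ‖v‖]

end Projection

section Cone

variable {F : Type*} [NormedAddCommGroup F] [InnerProductSpace ℝ F] {C K : Set F} {y m : F}

theorem IsProjOn.inner_sub_self_eq_zero (hC : Convex ℝ C)
    (hcone : ∀ t : ℝ, 0 < t → ∀ x ∈ C, t • x ∈ C) (hm : IsProjOn C y m) : ⟪y - m, m⟫ = 0 := by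
  have hobtuse := ((isProjOn_iff_inner_le_zero hC).1 hm).2
  have h2 := hobtuse _ (hcone 2 two_pos m hm.1)
  have hhalf := hobtuse _ (hcone (1 / 2) one_half_pos m hm.1)
  rw [show (2 : ℝ) • m - m = m by module] at h2
  rw [show (1 / 2 : ℝ) • m - m = (-1 / 2 : ℝ) • m by module, real_inner_smul_right] at hhalf
  linarith

theorem convex_dualCone (K : Set F) : Convex ℝ (dualCone K) := by
  intro a ha b hb s t hs ht _ x hx
  rw [inner_add_left, real_inner_smul_left, real_inner_smul_left]
  exact add_nonneg (mul_nonneg hs (ha x hx)) (mul_nonneg ht (hb x hx))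

theorem zero_mem_dualCone (K : Set F) : (0 : F) ∈ dualCone K := fun x _ => by
  rw [inner_zero_left]

/-- Moreau decomposition: `y = Π_{-K} y + Π_{K*} y`. -/
theorem IsProjOn.sub_isProjOn_dualCone (hK : Convex ℝ K)
    (hKcone : ∀ t : ℝ, 0 < t → ∀ x ∈ K, t • x ∈ K) (hm : IsProjOn (-K) y m) :
    IsProjOn (dualCone K) y (y - m) := by
  have hconeNeg : ∀ t : ℝ, 0 < t → ∀ x ∈ -K, t • x ∈ -K := fun t ht x hx => by
    simpa only [Set.mem_neg, smul_neg] using hKcone t ht _ hx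
  have horth := hm.inner_sub_self_eq_zero hK.neg hconeNeg
  have hobtuse := ((isProjOn_iff_inner_le_zero hK.neg).1 hm).2
  have hmK : -m ∈ K := hm.1
  rw [isProjOn_iff_inner_le_zero (convex_dualCone K)]
  refine ⟨fun x hx => ?_, fun s hs => ?_⟩
  · have hxm : x - m ∈ K := by
      have := hKcone 2 two_pos _ (hK hx hmK one_half_pos.le one_half_pos.le (by norm_num))
      convert this using 1
      module
    have := hobtuse (m - x) (by rwa [Set.mem_neg, neg_sub])
    rw [show m - x - m = -x by abel, inner_neg_right] at this
    linarith
  · have := hs _ hmK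
    rw [inner_neg_right] at this
    rw [sub_sub_cancel, inner_sub_right, real_inner_comm (y - m) m, horth]
    linarith [real_inner_comm m s]

end Cone

section Gradient

variable {E F : Type*} [NormedAddCommGroup E] [InnerProductSpace ℝ E] [CompleteSpace E]
  [NormedAddCommGroup F] [InnerProductSpace ℝ F] [CompleteSpace F]
  {φ ψ : E → ℝ} {φ' ψ' x : E}

theorem HasGradientAt.add (hφ : HasGradientAt φ φ' x) (hψ : HasGradientAt ψ ψ' x) :
    HasGradientAt (fun y => φ y + ψ y) (φ' + ψ') x := by
  rw [hasGradientAt_iff_hasFDerivAt, map_add]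
  exact hφ.hasFDerivAt.add hψ.hasFDerivAt

theorem HasGradientAt.const_mul (a : ℝ) (hφ : HasGradientAt φ φ' x) :
    HasGradientAt (fun y => a * φ y) (a • φ') x := by
  rw [hasGradientAt_iff_hasFDerivAt, map_smulₛₗ, conj_trivial]
  exact hφ.hasFDerivAt.const_mul a

theorem HasGradientAt.comp_hasFDerivAt {q : F → ℝ} {q' : F} {Y : E → F} {Y' : E →L[ℝ] F}
    (hq : HasGradientAt q q' (Y x)) (hY : HasFDerivAt Y Y' x) :
    HasGradientAt (fun y => q (Y y)) (Y'.adjoint q') x := by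
  rw [hasGradientAt_iff_hasFDerivAt]
  refine (hq.hasFDerivAt.comp x hY).congr_fderiv ?_
  ext e
  simp [ContinuousLinearMap.adjoint_inner_left]

theorem hasGradientAt_norm_sub_sq (a x : E) :
    HasGradientAt (fun y => ‖y - a‖ ^ 2) ((2 : ℝ) • (x - a)) x := by
  rw [hasGradientAt_iff_hasFDerivAt]
  refine (((hasFDerivAt_id x).sub_const a).norm_sq).congr_fderiv ?_
  ext e
  simp

theorem Convex.le_add_inner_add_sq_of_hasGradientAt {S : Set E} {Φ : E → ℝ} {Φ' : E → E} {L : ℝ} {z : E}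
    (hS : Convex ℝ S) (hΦ : ∀ u ∈ S, HasGradientAt Φ (Φ' u) u)
    (hlip : ∀ u ∈ S, ‖Φ' u - Φ' z‖ ≤ L * ‖u - z‖) (hz : z ∈ S) (hx : x ∈ S) :
    Φ x ≤ Φ z + ⟪Φ' z, x - z⟫ + L / 2 * ‖x - z‖ ^ 2 := by
  set d := x - z
  have hseg : ∀ t ∈ Set.Icc (0 : ℝ) 1, z + t • d ∈ S := fun t ht =>
    hS.add_smul_sub_mem hz hx ht
  let ρ : ℝ → ℝ := fun t => Φ (z + t • d) - t * ⟪Φ' z, d⟫ - L / 2 * ‖d‖ ^ 2 * t ^ 2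
  have hρ : ∀ t ∈ Set.Icc (0 : ℝ) 1,
      HasDerivAt ρ (⟪Φ' (z + t • d) - Φ' z, d⟫ - L * ‖d‖ ^ 2 * t) t := by
    intro t ht
    have hline : HasDerivAt (fun s : ℝ => z + s • d) d t := by
      simpa using ((hasDerivAt_id t).smul_const d).const_add z
    have hΦt := ((hΦ _ (hseg t ht)).hasFDerivAt.comp_hasDerivAt t hline)
    refine ((hΦt.sub ((hasDerivAt_id t).mul_const ⟪Φ' z, d⟫)).sub
      ((hasDerivAt_pow 2 t).const_mul (L / 2 * ‖d‖ ^ 2))).congr_deriv ?_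
    simp only [InnerProductSpace.toDual_apply_apply, inner_sub_left]
    ring
  have hanti : AntitoneOn ρ (Set.Icc 0 1) := by
    refine antitoneOn_of_hasDerivWithinAt_nonpos (convex_Icc 0 1)
      (fun t ht => (hρ t ht).continuousAt.continuousWithinAt)
      (fun t ht => (hρ t (interior_subset ht)).hasDerivWithinAt) fun t ht => ?_
    rw [interior_Icc] at ht
    have hlipt := hlip _ (hseg t (Set.Ioo_subset_Icc_self ht))
    rw [add_sub_cancel_left, norm_smul, Real.norm_eq_abs, abs_of_pos ht.1] at hlipt
    nlinarith [real_inner_le_norm (Φ' (z + t • d) - Φ' z) d, norm_nonneg d,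
      mul_le_mul_of_nonneg_right hlipt (norm_nonneg d)]
  have := hanti (Set.left_mem_Icc.2 zero_le_one) (Set.right_mem_Icc.2 zero_le_one) zero_le_one
  simp only [ρ, one_smul, zero_smul, add_zero, d, add_sub_cancel] at this
  linarith

end Gradient

theorem nonneg_of_forall_add_mul_nonneg {a b : ℝ} (h : ∀ t ∈ Set.Ioc (0 : ℝ) 1, 0 ≤ a + t * b) :
    0 ≤ a := by
  have hlim : Filter.Tendsto (fun t : ℝ => a + t * b) (nhdsWithin 0 (Set.Ioi 0)) (nhds a) := by
    refine tendsto_nhdsWithin_of_tendsto_nhds ?_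
    have hcont : Continuous fun t : ℝ => a + t * b := by fun_prop
    simpa using hcont.tendsto 0
  exact ge_of_tendsto hlim (Filter.eventually_of_mem (Ioc_mem_nhdsGT one_pos) h)

section EpsSubdiff

variable {E : Type*} [NormedAddCommGroup E] [InnerProductSpace ℝ E] {S : Set E} {φ : E → ℝ}
  {x z : E} {L ε : ℝ}

theorem ConvexOn.add_inner_sub (hφ : ConvexOn ℝ S φ) (a z : E) :
    ConvexOn ℝ S fun u => φ u + ⟪a, u - z⟫ := by
  refine ((hφ.add ((innerSL ℝ a).toLinearMap.convexOn hφ.1)).add_const (-⟪a, z⟫)).congr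
    fun u _ => ?_
  simp [sub_eq_add_neg, add_assoc, inner_add_right, inner_neg_right]

/-- First-order optimality of a proximal point `x` of `φ` at `z`. -/
theorem ConvexOn.add_inner_le_of_forall_add_sq_le (hφ : ConvexOn ℝ S φ) (hx : x ∈ S)
    (hmin : ∀ u ∈ S, φ x + L / 2 * ‖x - z‖ ^ 2 ≤ φ u + L / 2 * ‖u - z‖ ^ 2)
    {u : E} (hu : u ∈ S) : φ x + L * ⟪z - x, u - x⟫ ≤ φ u := by
  suffices 0 ≤ φ u - φ x - L * ⟪z - x, u - x⟫ by linarith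
  refine nonneg_of_forall_add_mul_nonneg (b := L / 2 * ‖u - x‖ ^ 2) fun t ht => ?_
  have hconv : φ (x + t • (u - x)) ≤ (1 - t) * φ x + t * φ u := by
    have := hφ.2 hx hu (sub_nonneg.2 ht.2) ht.1.le (by ring)
    rwa [show (1 - t) • x + t • u = x + t • (u - x) by module] at this
  have hnorm : ‖x + t • (u - x) - z‖ ^ 2
      = ‖x - z‖ ^ 2 - 2 * t * ⟪z - x, u - x⟫ + t ^ 2 * ‖u - x‖ ^ 2 := by
    rw [show x + t • (u - x) - z = (x - z) + t • (u - x) by abel, norm_add_sq_real,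
      real_inner_smul_right, norm_smul, Real.norm_eq_abs, mul_pow, sq_abs,
      ← neg_sub z x, inner_neg_left]
    ring
  have hmin_t := hmin _ (hφ.1.add_smul_sub_mem hx hu ⟨ht.1.le, ht.2⟩)
  rw [hnorm] at hmin_t
  have : 0 ≤ t * (φ u - φ x - L * ⟪z - x, u - x⟫ + t * (L / 2 * ‖u - x‖ ^ 2)) := by
    linear_combination hmin_t + hconv
  exact (mul_nonneg_iff_of_pos_left ht.1).1 this

theorem smul_sub_mem_epsSubdiff_of_prox (hL : 0 ≤ L)
    (hprox : ∀ u ∈ S, φ x + L * ⟪z - x, u - x⟫ ≤ φ u)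
    (hgap : φ z ≤ φ x + L / 2 * ‖x - z‖ ^ 2 + ε) : L • (z - x) ∈ epsSubdiff S φ ε z := by
  intro u hu
  have hsplit : ⟪z - x, u - x⟫ = ⟪z - x, u - z⟫ + ‖x - z‖ ^ 2 := by
    rw [norm_sub_rev, ← real_inner_self_eq_norm_sq, ← inner_add_right, sub_add_sub_cancel]
  rw [real_inner_smul_left]
  nlinarith [hprox u hu, mul_nonneg hL (sq_nonneg ‖x - z‖)]

theorem mul_norm_sub_sq_le_of_prox (hprox : ∀ u ∈ S, φ x + L * ⟪z - x, u - x⟫ ≤ φ u)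
    (hz : z ∈ S) (hgap : φ z ≤ φ x + L / 2 * ‖x - z‖ ^ 2 + ε) : L * ‖x - z‖ ^ 2 ≤ 2 * ε := by
  have := hprox z hz
  rw [real_inner_self_eq_norm_sq, norm_sub_rev] at this
  linarith

theorem inv_smul_add_sub_mem_epsSubdiff {h : E → ℝ} {G r a : E} {lam : ℝ} (hlam : 0 < lam)
    (ha : a ∈ epsSubdiff S (fun u => lam * (⟪G, u - z⟫ + h u) - ⟪r, u - z⟫) ε z) :
    lam⁻¹ • (a + r) - G ∈ epsSubdiff S h (ε / lam) z := by
  intro u hu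
  have hau := ha u hu
  simp only [sub_self, inner_zero_right] at hau
  rw [inner_sub_left, real_inner_smul_left, inner_add_left, ← mul_le_mul_iff_right₀ hlam]
  field_simp
  linarith

theorem ConvexOn.prox_refinement {h : E → ℝ} {G r : E} {lam : ℝ} (hh : ConvexOn ℝ S h)
    (hlam : 0 < lam) (hL : 0 ≤ L) (hx : x ∈ S) (hz : z ∈ S)
    (hmin : ∀ u ∈ S, lam * (⟪G, x - z⟫ + h x) - ⟪r, x - z⟫ + L / 2 * ‖x - z‖ ^ 2
      ≤ lam * (⟪G, u - z⟫ + h u) - ⟪r, u - z⟫ + L / 2 * ‖u - z‖ ^ 2)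
    (hgap : lam * h z ≤ lam * (⟪G, x - z⟫ + h x) - ⟪r, x - z⟫ + L / 2 * ‖x - z‖ ^ 2 + ε) :
    (1 / lam) • (r + L • (z - x)) - G ∈ epsSubdiff S h (ε / lam) z ∧
      L * ‖z - x‖ ^ 2 ≤ 2 * ε := by
  set φ : E → ℝ := fun u => lam * (⟪G, u - z⟫ + h u) - ⟪r, u - z⟫
  have hφ : ConvexOn ℝ S φ := by
    refine ((hh.smul hlam.le).add_inner_sub (lam • G - r) z).congr fun u _ => ?_
    simp only [φ, smul_eq_mul, inner_sub_left, real_inner_smul_left]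
    ring
  have hprox : ∀ u ∈ S, φ x + L * ⟪z - x, u - x⟫ ≤ φ u :=
    fun u hu => hφ.add_inner_le_of_forall_add_sq_le hx hmin hu
  have hgap' : φ z ≤ φ x + L / 2 * ‖x - z‖ ^ 2 + ε := by
    simpa only [φ, sub_self, inner_zero_right, zero_add, sub_zero] using hgap
  refine ⟨?_, norm_sub_rev z x ▸ mul_norm_sub_sq_le_of_prox hprox hz hgap'⟩
  simpa only [one_div, add_comm r] using
    inv_smul_add_sub_mem_epsSubdiff hlam (smul_sub_mem_epsSubdiff_of_prox hL hprox hgap')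

end EpsSubdiff

section AugmentedLagrangian

variable {E F : Type*} [NormedAddCommGroup E] [InnerProductSpace ℝ E] [CompleteSpace E]
  [NormedAddCommGroup F] [InnerProductSpace ℝ F] [CompleteSpace F]
  {H : Set E} {g : E → F} {g' : E → E →L[ℝ] F} {c : ℝ} {pm : F} {u z : E}

theorem hasGradientAt_infDist_sq_comp {K : Set F} (hK : Convex ℝ K) {π : F → F}
    (hπ : ∀ y, IsProjOn (-K) y (π y)) (hc : c ≠ 0) (hg : HasFDerivAt g (g' u) u) :
    HasGradientAt (fun x => Metric.infDist (pm + c • g x) (-K) ^ 2 / (2 * c))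
      ((g' u).adjoint (pm + c • g u - π (pm + c • g u))) u := by
  have hY : HasFDerivAt (fun x => pm + c • g x) (c • g' u) u := (hg.const_smul c).const_add pm
  convert ((hasGradientAt_infDist_sq hK.neg hπ _).comp_hasFDerivAt hY).const_mul (1 / (2 * c))
    using 1
  · funext x
    ring
  · simp only [map_smulₛₗ, conj_trivial, smul_apply, smul_smul]
    field_simp
    simp

theorem norm_adjoint_apply_isProjOn_sub_le {S : Set F} (hS : Convex ℝ S) (h0 : (0 : F) ∈ S)
    {Q : F → F} (hQ : ∀ y, IsProjOn S y (Q y)) (hH : Convex ℝ H)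
    (hgdiff : ∀ x ∈ H, HasFDerivAt g (g' x) x) {Lg Bg0 Bg1 : ℝ} (hLg : 0 ≤ Lg)
    (hglip : ‖g' u - g' z‖ ≤ Lg * ‖u - z‖) (hBg0 : ‖g u‖ ≤ Bg0) (hBg1 : ∀ x ∈ H, ‖g' x‖ ≤ Bg1)
    (hc : 0 ≤ c) (hu : u ∈ H) (hz : z ∈ H) :
    ‖(g' u).adjoint (Q (pm + c • g u)) - (g' z).adjoint (Q (pm + c • g z))‖
      ≤ (Lg * ‖pm‖ + c * (Bg0 * Lg + Bg1 ^ 2)) * ‖u - z‖ := by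
  have hBg1z : 0 ≤ Bg1 := (norm_nonneg _).trans (hBg1 z hz)
  have hglip' : ‖g u - g z‖ ≤ Bg1 * ‖u - z‖ :=
    hH.norm_image_sub_le_of_norm_hasFDerivWithin_le (fun x hx => (hgdiff x hx).hasFDerivWithinAt)
      hBg1 hz hu
  have hQu : ‖Q (pm + c • g u)‖ ≤ ‖pm‖ + c * Bg0 := by
    refine ((hQ _).norm_le hS h0).trans ((norm_add_le _ _).trans ?_)
    rw [norm_smul, Real.norm_of_nonneg hc]
    gcongr
  have hQuz : ‖Q (pm + c • g u) - Q (pm + c • g z)‖ ≤ c * (Bg1 * ‖u - z‖) := by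
    refine ((hQ _).norm_sub_le hS (hQ _)).trans ?_
    rw [add_sub_add_left_eq_sub, ← smul_sub, norm_smul, Real.norm_of_nonneg hc]
    gcongr
  have hsplit : (g' u).adjoint (Q (pm + c • g u)) - (g' z).adjoint (Q (pm + c • g z))
      = (g' u - g' z).adjoint (Q (pm + c • g u))
        + (g' z).adjoint (Q (pm + c • g u) - Q (pm + c • g z)) := by
    simp only [map_sub, sub_apply]
    abel
  calc _ ≤ ‖g' u - g' z‖ * ‖Q (pm + c • g u)‖
        + ‖g' z‖ * ‖Q (pm + c • g u) - Q (pm + c • g z)‖ := by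
        rw [hsplit, ← LinearIsometryEquiv.norm_map ContinuousLinearMap.adjoint (g' u - g' z),
          ← LinearIsometryEquiv.norm_map ContinuousLinearMap.adjoint (g' z)]
        exact (norm_add_le _ _).trans
          (add_le_add (ContinuousLinearMap.le_opNorm _ _) (ContinuousLinearMap.le_opNorm _ _))
    _ ≤ Lg * ‖u - z‖ * (‖pm‖ + c * Bg0) + Bg1 * (c * (Bg1 * ‖u - z‖)) := by
        gcongr
        exact hBg1 z hz
    _ = _ := by ring

end AugmentedLagrangian

theorem augLag_descent {E F : Type*} [NormedAddCommGroup E] [InnerProductSpace ℝ E]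
    [CompleteSpace E] [NormedAddCommGroup F] [InnerProductSpace ℝ F] [FiniteDimensional ℝ F]
    {K : Set F} (hKne : K.Nonempty) (hKcl : IsClosed K) (hKcvx : Convex ℝ K)
    (hKcone : ∀ t : ℝ, 0 < t → ∀ x ∈ K, t • x ∈ K)
    {H : Set E} (hH : Convex ℝ H) {f h : E → ℝ} {f' : E → E} {g : E → F}
    {g' : E → E →L[ℝ] F} {Lf Lg Bg0 Bg1 lam c : ℝ} {zm z x : E} {pm p : F}
    (hfdiff : ∀ u ∈ H, HasGradientAt f (f' u) u)
    (hflip : ∀ u ∈ H, ‖f' u - f' z‖ ≤ Lf * ‖u - z‖)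
    (hgdiff : ∀ u ∈ H, HasFDerivAt g (g' u) u) (hLg : 0 ≤ Lg)
    (hglip : ∀ u ∈ H, ‖g' u - g' z‖ ≤ Lg * ‖u - z‖)
    (hBg0 : ∀ u ∈ H, ‖g u‖ ≤ Bg0) (hBg1 : ∀ u ∈ H, ‖g' u‖ ≤ Bg1)
    (hlam : 0 ≤ lam) (hc : 0 < c) (hz : z ∈ H) (hx : x ∈ H)
    (hp : IsProjOn (dualCone K) (pm + c • g z) p) :
    lam * AugLag K f h g c x pm + 1 / 2 * ‖x - zm‖ ^ 2
      ≤ lam * AugLag K f h g c z pm + 1 / 2 * ‖z - zm‖ ^ 2 + lam * (h x - h z)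
        + ⟪lam • (f' z + (g' z).adjoint p) + (z - zm), x - z⟫
        + (lam * (Lf + Lg * ‖pm‖ + c * (Bg0 * Lg + Bg1 ^ 2)) + 1) / 2 * ‖x - z‖ ^ 2 := by
  choose π hπ using hKcl.neg.exists_isProjOn hKne.neg
  have hQ : ∀ y, IsProjOn (dualCone K) y (y - π y) :=
    fun y => (hπ y).sub_isProjOn_dualCone hKcvx hKcone
  obtain rfl : p = pm + c • g z - π (pm + c • g z) := hp.eq (convex_dualCone K) (hQ _)
  set Φ' : E → E := fun u =>
    lam • (f' u + (g' u).adjoint (pm + c • g u - π (pm + c • g u))) + (u - zm) with hΦ'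
  have hgrad : ∀ u ∈ H, HasGradientAt
      (fun u => lam * (f u + Metric.infDist (pm + c • g u) (-K) ^ 2 / (2 * c))
        + 1 / 2 * ‖u - zm‖ ^ 2) (Φ' u) u := by
    intro u hu
    convert (((hfdiff u hu).add (hasGradientAt_infDist_sq_comp hKcvx hπ hc.ne'
      (hgdiff u hu))).const_mul lam).add ((hasGradientAt_norm_sub_sq zm u).const_mul (1 / 2))
      using 1
    rw [hΦ', smul_smul]
    norm_num
  have hlip : ∀ u ∈ H, ‖Φ' u - Φ' z‖
      ≤ (lam * (Lf + Lg * ‖pm‖ + c * (Bg0 * Lg + Bg1 ^ 2)) + 1) * ‖u - z‖ := by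
    intro u hu
    have hpen := norm_adjoint_apply_isProjOn_sub_le (convex_dualCone K) (zero_mem_dualCone K) hQ
      hH hgdiff hLg (hglip u hu) (hBg0 u hu) hBg1 hc.le hu hz (pm := pm)
    have hsplit : Φ' u - Φ' z = lam • ((f' u - f' z)
        + ((g' u).adjoint (pm + c • g u - π (pm + c • g u))
          - (g' z).adjoint (pm + c • g z - π (pm + c • g z)))) + (u - z) := by
      simp only [hΦ']
      module
    rw [hsplit]
    refine (norm_add_le _ _).trans ?_
    rw [norm_smul, Real.norm_of_nonneg hlam]
    have := (norm_add_le _ _).trans (add_le_add (hflip u hu) hpen)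
    nlinarith [mul_le_mul_of_nonneg_left this hlam]
  have := hH.le_add_inner_add_sq_of_hasGradientAt hgrad hlip hz hx
  simp only [AugLag]
  linear_combination this

theorem norm_one_div_smul_add_smul_le {E : Type*} [NormedAddCommGroup E] [InnerProductSpace ℝ E]
    {r d : E} {lam L s : ℝ} (hlam : 0 < lam) (hL : 0 ≤ L) (hs : 0 ≤ s)
    (hd : L * ‖d‖ ^ 2 ≤ s ^ 2 * ‖r‖ ^ 2) :
    ‖(1 / lam) • (r + L • d)‖ ≤ 1 / lam * (1 + s * √L) * ‖r‖ := by
  have hsqrt : √L * ‖d‖ ≤ s * ‖r‖ := by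
    rw [← pow_le_pow_iff_left₀ (by positivity) (by positivity) two_ne_zero, mul_pow, mul_pow,
      Real.sq_sqrt hL]
    exact hd
  have hnorm : ‖r + L • d‖ ≤ ‖r‖ + √L * (s * ‖r‖) := by
    calc ‖r + L • d‖ ≤ ‖r‖ + √L * (√L * ‖d‖) := by
          rw [← mul_assoc, Real.mul_self_sqrt hL]
          simpa only [norm_smul, Real.norm_of_nonneg hL] using norm_add_le r (L • d)
      _ ≤ ‖r‖ + √L * (s * ‖r‖) := by gcongr
  rw [norm_smul, Real.norm_of_nonneg (by positivity)]
  calc 1 / lam * ‖r + L • d‖ ≤ 1 / lam * (‖r‖ + √L * (s * ‖r‖)) := by gcongr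
    _ = _ := by ring

theorem refinement_weak_general
    {E F : Type*}
    [NormedAddCommGroup E] [InnerProductSpace ℝ E] [FiniteDimensional ℝ E]
    [NormedAddCommGroup F] [InnerProductSpace ℝ F] [FiniteDimensional ℝ F]
    -- K is a nonempty closed convex cone
    (K : Set F) (hKne : K.Nonempty) (hKcl : IsClosed K) (hKcvx : Convex ℝ K)
    (hKcone : ∀ t : ℝ, 0 < t → ∀ x ∈ K, t • x ∈ K)
    -- (B1): h proper closed convex, K_h-Lipschitz on its compact domain H of diameter ≤ Dh
    (H : Set E) (h : E → ℝ)
    (hHcvx : Convex ℝ H)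
    (hhcvx : ConvexOn ℝ H h)
    -- (B2): f differentiable on H with lower curvature m_f and L_f-Lipschitz gradient
    (f : E → ℝ) (f' : E → E) (Lf : ℝ) (hLf : 0 < Lf)
    (hfdiff : ∀ z ∈ H, HasGradientAt f (f' z) z)
    (hflip : ∀ z ∈ H, ∀ z' ∈ H, ‖f' z' - f' z‖ ≤ Lf * ‖z' - z‖)
    -- (B3): g K-convex and differentiable with L_g-Lipschitz derivative
    (g : E → F) (g' : E → (E →L[ℝ] F)) (Lg : ℝ) (hLg : 0 < Lg)
    (hgdiff : ∀ z, HasFDerivAt g (g' z) z)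
    (hglip : ∀ z z' : E, ‖g' z' - g' z‖ ≤ Lg * ‖z' - z‖)
    -- bounds B_g⁽⁰⁾ and B_g⁽¹⁾
    (Bg0 Bg1 : ℝ) (hBg0 : ∀ z ∈ H, ‖g z‖ ≤ Bg0) (hBg1 : ∀ z ∈ H, ‖g' z‖ ≤ Bg1)
    -- data of the prox subproblem
    (lam σ c : ℝ) (hlam : 0 < lam) (hσ0 : 0 < σ) (hc : 0 < c)
    (zm : E) (pm : F)
    (Lψ : ℝ) (hLψ : Lψ = lam * (Lf + Lg * ‖pm‖ + c * (Bg0 * Lg + Bg1 ^ 2)) + 1)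
    (σ' : ℝ) (hσ' : σ' = σ / Real.sqrt Lψ)
    -- the inexact solution (z, v, ε) of the prox subproblem
    (z : E) (hz : z ∈ H) (v : E) (ε : ℝ)
    (hv : v ∈ epsSubdiff H
      (fun u => lam * AugLag K f h g c u pm + (1 / 2) * ‖u - zm‖ ^ 2) ε z)
    (hvineq : ‖v‖ ^ 2 + 2 * ε ≤ σ' ^ 2 * ‖v + zm - z‖ ^ 2)
    -- refined quantities
    (r : E) (hr : r = v + zm - z)
    (δ : ℝ) (hδ : δ = ε / lam)
    (p : F) (hp : IsProjOn (dualCone K) (pm + c • g z) p)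
    (zhat : E) (hzhatH : zhat ∈ H)
    (hzhatmin : ∀ u ∈ H,
      lam * (⟪f' z + (g' z).adjoint p, zhat - z⟫ + h zhat) - ⟪r, zhat - z⟫
          + (Lψ / 2) * ‖zhat - z‖ ^ 2 ≤
        lam * (⟪f' z + (g' z).adjoint p, u - z⟫ + h u) - ⟪r, u - z⟫
          + (Lψ / 2) * ‖u - z‖ ^ 2)
    (w : E) (hw : w = (1 / lam) • (r + Lψ • (z - zhat))) :
    -- conclusions: w ∈ ∇f(z) + ∂_δ h(z) + ∇g(z)p and the bounds on ‖w‖ and δ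
    w - f' z - (g' z).adjoint p ∈ epsSubdiff H h δ z ∧
    ‖w‖ ≤ (1 / lam) * (1 + σ' * Real.sqrt Lψ) * ‖r‖ ∧
    δ ≤ σ' ^ 2 * ‖r‖ ^ 2 / (2 * lam) := by
  have hLψ0 : 0 ≤ Lψ := by
    have hBL : 0 ≤ Bg0 * Lg := mul_nonneg ((norm_nonneg _).trans (hBg0 z hz)) hLg.le
    have : 0 ≤ Lf + Lg * ‖pm‖ + c * (Bg0 * Lg + Bg1 ^ 2) :=
      add_nonneg (by positivity) (mul_nonneg hc.le (add_nonneg hBL (sq_nonneg _)))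
    rw [hLψ]
    exact add_nonneg (mul_nonneg hlam.le this) zero_le_one
  have hdesc := augLag_descent hKne hKcl hKcvx hKcone hHcvx hfdiff (hflip z hz)
    (fun u _ => hgdiff u) hLg.le (fun u _ => hglip z u) hBg0 hBg1 hlam.le hc hz hzhatH hp
    (h := h) (zm := zm)
  rw [← hLψ] at hdesc
  have hgap : lam * h z ≤ lam * (⟪f' z + (g' z).adjoint p, zhat - z⟫ + h zhat)
      - ⟪r, zhat - z⟫ + Lψ / 2 * ‖zhat - z‖ ^ 2 + ε := by
    have hvr : ⟪v, zhat - z⟫ = ⟪r, zhat - z⟫ + ⟪z - zm, zhat - z⟫ := by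
      rw [← inner_add_left, hr]
      congr 1
      abel
    have := hv zhat hzhatH
    simp only [inner_add_left, real_inner_smul_left] at this hdesc ⊢
    linarith
  obtain ⟨hsub, hd⟩ := hhcvx.prox_refinement hlam hLψ0 hzhatH hz hzhatmin hgap
  have h2ε : 2 * ε ≤ σ' ^ 2 * ‖r‖ ^ 2 := by
    rw [hr]
    linarith [sq_nonneg ‖v‖]
  refine ⟨by rwa [hw, hδ, sub_sub], ?_, ?_⟩
  · rw [hw]
    exact norm_one_div_smul_add_smul_le hlam hLψ0 (by rw [hσ']; positivity) (hd.trans h2ε)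
  · rw [hδ, div_le_div_iff₀ hlam (by positivity)]
    linarith [mul_le_mul_of_nonneg_right h2ε hlam.le]

/-- basic properties of the refined iterate of one NL-IAPIAL prox step
(Proposition 2.2(a) of the paper). -/
theorem refinement_weak
    {E F : Type*}
    [NormedAddCommGroup E] [InnerProductSpace ℝ E] [FiniteDimensional ℝ E]
    [NormedAddCommGroup F] [InnerProductSpace ℝ F] [FiniteDimensional ℝ F]
    -- K is a nonempty closed convex cone
    (K : Set F) (hKne : K.Nonempty) (hKcl : IsClosed K) (hKcvx : Convex ℝ K)
    (hKcone : ∀ t : ℝ, 0 < t → ∀ x ∈ K, t • x ∈ K)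
    -- (B1): h proper closed convex, K_h-Lipschitz on its compact domain H of diameter ≤ Dh
    (H : Set E) (h : E → ℝ) (Kh Dh : ℝ) (hKh : 0 < Kh) (hDh0 : 0 < Dh)
    (hHne : H.Nonempty) (hHcpt : IsCompact H) (hHcvx : Convex ℝ H)
    (hhcvx : ConvexOn ℝ H h)
    (hhlip : ∀ x ∈ H, ∀ y ∈ H, |h x - h y| ≤ Kh * ‖x - y‖)
    (hDh : ∀ x ∈ H, ∀ y ∈ H, ‖x - y‖ ≤ Dh)
    -- (B2): f differentiable on H with lower curvature m_f and L_f-Lipschitz gradient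
    (f : E → ℝ) (f' : E → E) (mf Lf : ℝ) (hmf : 0 < mf) (hLf : 0 < Lf)
    (hfdiff : ∀ z ∈ H, HasGradientAt f (f' z) z)
    (hflow : ∀ z ∈ H, ∀ z' ∈ H, -(mf / 2) * ‖z' - z‖ ^ 2 ≤ f z' - f z - ⟪f' z, z' - z⟫)
    (hflip : ∀ z ∈ H, ∀ z' ∈ H, ‖f' z' - f' z‖ ≤ Lf * ‖z' - z‖)
    -- (B3): g K-convex and differentiable with L_g-Lipschitz derivative
    (g : E → F) (g' : E → (E →L[ℝ] F)) (Lg : ℝ) (hLg : 0 < Lg)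
    (hgdiff : ∀ z, HasFDerivAt g (g' z) z) (hgK : KConvex K g)
    (hglip : ∀ z z' : E, ‖g' z' - g' z‖ ≤ Lg * ‖z' - z‖)
    -- bounds B_g⁽⁰⁾ and B_g⁽¹⁾
    (Bg0 Bg1 : ℝ) (hBg0 : ∀ z ∈ H, ‖g z‖ ≤ Bg0) (hBg1 : ∀ z ∈ H, ‖g' z‖ ≤ Bg1)
    -- data of the prox subproblem
    (lam σ c : ℝ) (hlam : 0 < lam) (hσ0 : 0 < σ) (hσ1 : σ < 1) (hc : 0 < c)
    (zm : E) (hzm : zm ∈ H) (pm : F)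
    (Lψ : ℝ) (hLψ : Lψ = lam * (Lf + Lg * ‖pm‖ + c * (Bg0 * Lg + Bg1 ^ 2)) + 1)
    (σ' : ℝ) (hσ' : σ' = σ / Real.sqrt Lψ)
    -- the inexact solution (z, v, ε) of the prox subproblem
    (z : E) (hz : z ∈ H) (v : E) (ε : ℝ) (hε : 0 ≤ ε)
    (hv : v ∈ epsSubdiff H
      (fun u => lam * AugLag K f h g c u pm + (1 / 2) * ‖u - zm‖ ^ 2) ε z)
    (hvineq : ‖v‖ ^ 2 + 2 * ε ≤ σ' ^ 2 * ‖v + zm - z‖ ^ 2)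
    -- refined quantities
    (r : E) (hr : r = v + zm - z)
    (δ : ℝ) (hδ : δ = ε / lam)
    (p : F) (hp : IsProjOn (dualCone K) (pm + c • g z) p)
    (zhat : E) (hzhatH : zhat ∈ H)
    (hzhatmin : ∀ u ∈ H,
      lam * (⟪f' z + (g' z).adjoint p, zhat - z⟫ + h zhat) - ⟪r, zhat - z⟫
          + (Lψ / 2) * ‖zhat - z‖ ^ 2 ≤
        lam * (⟪f' z + (g' z).adjoint p, u - z⟫ + h u) - ⟪r, u - z⟫
          + (Lψ / 2) * ‖u - z‖ ^ 2)
    (w : E) (hw : w = (1 / lam) • (r + Lψ • (z - zhat))) :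
    -- conclusions: w ∈ ∇f(z) + ∂_δ h(z) + ∇g(z)p and the bounds on ‖w‖ and δ
    w - f' z - (g' z).adjoint p ∈ epsSubdiff H h δ z ∧
    ‖w‖ ≤ (1 / lam) * (1 + σ' * Real.sqrt Lψ) * ‖r‖ ∧
    δ ≤ σ' ^ 2 * ‖r‖ ^ 2 / (2 * lam) :=
  refinement_weak_general K hKne hKcl hKcvx hKcone H h hHcvx hhcvx f f' Lf hLf hfdiff hflip g g' Lg
    hLg hgdiff hglip Bg0 Bg1 hBg0 hBg1 lam σ c hlam hσ0 hc zm pm Lψ hLψ σ' hσ' z hz v ε hv hvineq r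
    hr δ hδ p hp zhat hzhatH hzhatmin w hw
end

section
/- Assume (B1)–(B3), that the feasible set F := {z ∈ H : g(z) ∈ −K} is nonempty, and let λ > 0, σ ∈ (0, 1/√2], c̃ > 0, z⁻ ∈ H, p⁻ ∈ ℝ^ℓ. Suppose (z, v, ε) ∈ H × ℝ^n × ℝ_+ satisfies the prox condition with data (λ, σ, c̃, z⁻, p⁻), set p := Π_{K*}(p⁻ + c̃ g(z)), and suppose ‖p‖ ≤ C and ‖p⁻‖ ≤ C for some C ≥ 0. Then L_{c̃}(z;p) ≤ φ* + D_h²/λ + 4C²/c̃, where φ* := inf{f(u) + h(u) : u ∈ F}. -/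
/-!
Test the ε-prox inclusion against a feasible point `u`. Since `c g(u) ∈ -K`, the penalty term of
`L_c(u; p⁻)` is nonpositive, so `L_c(u; p⁻) ≤ f(u) + h(u)`; and the relative error condition with
`σ'² ≤ 1/2` absorbs all quadratic terms up to `D_h²`, giving `λ L_c(z; p⁻) ≤ λ (f + h)(u) + D_h²`.
Moreau's decomposition `p⁻ + c g(z) = p + (p⁻ + c g(z) - p)`, with the second summand in `-K` and
orthogonal to `p`, gives `dist(p⁻ + c g(z), -K) = ‖p‖`; the distance being 1-Lipschitz, passing
from `p⁻` to `p` then raises the augmented Lagrangian by at most `4C²/c`.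
-/

open RealInnerProductSpace Pointwise

section Cone

variable {F : Type*} [NormedAddCommGroup F] [InnerProductSpace ℝ F] {q p : F}

theorem IsProjOn.inner_sub_nonpos {S : Set F} (hS : Convex ℝ S) (hp : IsProjOn S q p)
    {w : F} (hw : w ∈ S) : ⟪q - p, w - p⟫ ≤ 0 := by
  have : Nonempty S := ⟨⟨p, hp.1⟩⟩
  refine (norm_eq_iInf_iff_real_inner_le_zero hS hp.1).mp ?_ w hw
  refine le_antisymm (le_ciInf fun w => ?_) (ciInf_le ⟨0, ?_⟩ (⟨p, hp.1⟩ : S))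
  · simpa only [dist_eq_norm] using hp.2 w w.2
  · rintro _ ⟨w, rfl⟩
    exact norm_nonneg _

theorem IsProjOn.inner_sub_self_eq_zero_s11 (D : ProperCone ℝ F) (hp : IsProjOn D q p) :
    ⟪q - p, p⟫ = 0 := by
  have h2p : ⟪q - p, (2 : ℝ) • p - p⟫ ≤ 0 :=
    hp.inner_sub_nonpos D.convex (D.smul_mem hp.1 zero_le_two)
  have h0 : ⟪q - p, 0 - p⟫ ≤ 0 := hp.inner_sub_nonpos D.convex D.zero_mem
  rw [two_smul, add_sub_cancel_right] at h2p
  rw [zero_sub, inner_neg_right] at h0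
  linarith

theorem IsProjOn.sub_mem_dualCone (D : ProperCone ℝ F) (hp : IsProjOn D q p) :
    p - q ∈ dualCone (D : Set F) := by
  intro w hw
  have := hp.inner_sub_nonpos D.convex (D.add_mem hp.1 hw)
  rw [add_sub_cancel_left, ← neg_sub, inner_neg_left] at this
  linarith

theorem exists_properCone_coe_eq {K : Set F} (hKne : K.Nonempty) (hKcl : IsClosed K)
    (hKcvx : Convex ℝ K) (hKcone : ∀ t : ℝ, 0 < t → ∀ x ∈ K, t • x ∈ K) :
    ∃ C : ProperCone ℝ F, (C : Set F) = K := by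
  obtain ⟨C₀, hC₀⟩ : ∃ C₀ : ConvexCone ℝ F, (C₀ : Set F) = K := by
    refine ⟨ConvexCone.hull ℝ K, Set.Subset.antisymm (fun x hx => ?_) ConvexCone.subset_hull⟩
    obtain ⟨r, hr, y, hy, rfl⟩ := (ConvexCone.mem_hull_of_convex hKcvx).1 hx
    exact hKcone r hr y hy
  subst hC₀
  lift C₀ to ProperCone ℝ F using ⟨hKne, hKcl⟩ with C
  exact ⟨C, rfl⟩

end Cone

section DualCone

variable {F : Type*} [NormedAddCommGroup F] [InnerProductSpace ℝ F] [CompleteSpace F]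

theorem dualCone_eq_coe_innerDual (s : Set F) : dualCone s = ProperCone.innerDual s := by
  ext y
  simp only [dualCone, Set.mem_ofPred_eq, SetLike.mem_coe, ProperCone.mem_innerDual,
    real_inner_comm y]

theorem dualCone_dualCone (C : ProperCone ℝ F) : dualCone (dualCone (C : Set F)) = C := by
  rw [dualCone_eq_coe_innerDual, dualCone_eq_coe_innerDual, ProperCone.innerDual_innerDual]

theorem infDist_neg_eq_norm_of_isProjOn_dualCone (C : ProperCone ℝ F) {q p : F}
    (hp : IsProjOn (dualCone C) q p) : Metric.infDist q (-(C : Set F)) = ‖p‖ := by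
  rw [dualCone_eq_coe_innerDual] at hp
  have hqp : q - p ∈ -(C : Set F) := by
    have := hp.sub_mem_dualCone
    rwa [← dualCone_eq_coe_innerDual, dualCone_dualCone, ← neg_sub, ← Set.mem_neg] at this
  refine le_antisymm ?_ ((Metric.le_infDist ⟨_, hqp⟩).2 fun k hk => ?_)
  · simpa only [dist_eq_norm, sub_sub_cancel] using Metric.infDist_le_dist_of_mem hqp (x := q)
  -- `‖p‖² = ⟪q, p⟫ ≤ ⟪q - k, p⟫ ≤ ‖q - k‖ ‖p‖`, as `⟪k, p⟫ ≤ 0` for `k ∈ -C`, `p ∈ C*`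
  · have hkp : 0 ≤ ⟪-k, p⟫ := hp.1 hk
    have horth := hp.inner_sub_self_eq_zero_s11
    have hCS := real_inner_le_norm (q - k) p
    rw [inner_sub_left, real_inner_self_eq_norm_sq] at horth
    rw [inner_neg_left] at hkp
    rw [inner_sub_left] at hCS
    rw [dist_eq_norm]
    nlinarith [norm_nonneg p, norm_nonneg (q - k)]

end DualCone

section AugLag

variable {E F : Type*} [NormedAddCommGroup E] [InnerProductSpace ℝ E]
  [NormedAddCommGroup F] [InnerProductSpace ℝ F] {K : Set F} {f h : E → ℝ} {g : E → F} {c : ℝ}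

theorem augLag_le_of_mem_neg (hKcone : ∀ t : ℝ, 0 < t → ∀ x ∈ K, t • x ∈ K) (hc : 0 < c)
    {u : E} (hu : g u ∈ -K) (p : F) : AugLag K f h g c u p ≤ f u + h u := by
  have hcgu : c • g u ∈ -K := by
    simpa only [Set.mem_neg, smul_neg] using hKcone c hc _ hu
  have hdist : Metric.infDist (p + c • g u) (-K) ≤ ‖p‖ := by
    simpa only [dist_eq_norm, add_sub_cancel_right] using
      Metric.infDist_le_dist_of_mem hcgu (x := p + c • g u)
  have hsq := pow_le_pow_left₀ Metric.infDist_nonneg hdist 2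
  have : 1 / (2 * c) * (Metric.infDist (p + c • g u) (-K) ^ 2 - ‖p‖ ^ 2) ≤ 0 :=
    mul_nonpos_of_nonneg_of_nonpos (by positivity) (by linarith)
  unfold AugLag
  linarith

theorem augLag_le_augLag_add_of_infDist_eq_norm (hc : 0 < c) {z : E} {p pm : F} {C : ℝ}
    (hq : Metric.infDist (pm + c • g z) (-K) = ‖p‖) (hpC : ‖p‖ ≤ C) (hpmC : ‖pm‖ ≤ C) :
    AugLag K f h g c z p ≤ AugLag K f h g c z pm + 4 * C ^ 2 / c := by
  have hd : Metric.infDist (p + c • g z) (-K) ≤ 2 * ‖p‖ + ‖pm‖ := by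
    have := Metric.infDist_le_infDist_add_dist (x := p + c • g z) (y := pm + c • g z) (s := -K)
    rw [hq, dist_add_right, dist_eq_norm] at this
    linarith [norm_sub_le p pm]
  have hd2 := pow_le_pow_left₀ Metric.infDist_nonneg hd 2
  -- `(2a + b)² - 2a² + b² = 2(a + b)²`
  have hgap : Metric.infDist (p + c • g z) (-K) ^ 2 - ‖p‖ ^ 2 - (‖p‖ ^ 2 - ‖pm‖ ^ 2)
      ≤ 8 * C ^ 2 := by
    nlinarith [norm_nonneg p, norm_nonneg pm]
  unfold AugLag
  rw [hq]
  have h8 : 1 / (2 * c) * (8 * C ^ 2) = 4 * C ^ 2 / c := by field_simp; ring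
  nlinarith [mul_le_mul_of_nonneg_left hgap (by positivity : (0 : ℝ) ≤ 1 / (2 * c))]

end AugLag

theorem le_add_sq_of_mem_epsSubdiff {E : Type*} [NormedAddCommGroup E] [InnerProductSpace ℝ E]
    {D : Set E} {ψ : E → ℝ} {zm z v u : E} {ε δ : ℝ}
    (hv : v ∈ epsSubdiff D (fun u => ψ u + (1 / 2) * ‖u - zm‖ ^ 2) ε z)
    (hvineq : ‖v‖ ^ 2 + 2 * ε ≤ (1 / 2) * ‖v + zm - z‖ ^ 2) (hε : 0 ≤ ε)
    (hu : u ∈ D) (hδ : ‖u - zm‖ ≤ δ) : ψ z ≤ ψ u + δ ^ 2 := by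
  have hsub := hv u hu
  have hid : ‖u - zm‖ ^ 2 - ‖z - zm‖ ^ 2 - 2 * ⟪v, u - z⟫
      = ‖u - zm - v‖ ^ 2 - ‖v + zm - z‖ ^ 2 := by
    rw [show v + zm - z = v - (z - zm) by abel, show u - z = (u - zm) - (z - zm) by abel,
      norm_sub_sq_real (u - zm) v, norm_sub_sq_real v, inner_sub_right, real_inner_comm v (u - zm)]
    ring
  have htri : ‖u - zm - v‖ ≤ δ + ‖v‖ := (norm_sub_le _ _).trans (by linarith)
  have htri2 := pow_le_pow_left₀ (norm_nonneg _) htri 2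
  dsimp only at hsub
  -- `½‖u - zm - v‖² ≤ δ² + ‖v‖²` and `‖v‖² + ε ≤ ½‖v + zm - z‖² - ε`
  nlinarith [sq_nonneg (δ - ‖v‖)]

theorem div_sqrt_sq_le_half {σ L : ℝ} (hσ0 : 0 ≤ σ) (hσ : σ ≤ 1 / √2) (hL : 1 ≤ L) :
    (σ / √L) ^ 2 ≤ 1 / 2 := by
  have hσ2 : σ ^ 2 ≤ 1 / 2 := by
    simpa [div_pow, Real.sq_sqrt] using pow_le_pow_left₀ hσ0 hσ 2
  rw [div_pow, Real.sq_sqrt (by linarith), div_le_iff₀ (by linarith)]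
  nlinarith

theorem auglag_upper_bound_general
    {E F : Type*}
    [NormedAddCommGroup E] [InnerProductSpace ℝ E]
    [NormedAddCommGroup F] [InnerProductSpace ℝ F] [FiniteDimensional ℝ F]
    -- K is a nonempty closed convex cone
    (K : Set F) (hKne : K.Nonempty) (hKcl : IsClosed K) (hKcvx : Convex ℝ K)
    (hKcone : ∀ t : ℝ, 0 < t → ∀ x ∈ K, t • x ∈ K)
    -- (B1): h proper closed convex, K_h-Lipschitz on its compact domain H of diameter ≤ Dh
    (H : Set E) (h : E → ℝ) (Dh : ℝ)
    (hDh : ∀ x ∈ H, ∀ y ∈ H, ‖x - y‖ ≤ Dh)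
    -- (B2): f differentiable on H with lower curvature m_f and L_f-Lipschitz gradient
    (f : E → ℝ) (Lf : ℝ) (hLf : 0 < Lf)
    -- (B3): g K-convex and differentiable with L_g-Lipschitz derivative
    (g : E → F) (Lg : ℝ) (hLg : 0 < Lg)
    -- bounds B_g⁽⁰⁾ and B_g⁽¹⁾
    (Bg0 Bg1 : ℝ) (hBg0 : ∀ z ∈ H, ‖g z‖ ≤ Bg0)
    -- the feasible set is nonempty
    (hFne : {u | u ∈ H ∧ g u ∈ -K}.Nonempty)
    -- data of the prox subproblem
    (lam σ ct : ℝ) (hlam : 0 < lam) (hσ0 : 0 < σ) (hσ1 : σ ≤ 1 / Real.sqrt 2) (hct : 0 < ct)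
    (zm : E) (hzm : zm ∈ H) (pm : F)
    (Lψ : ℝ) (hLψ : Lψ = lam * (Lf + Lg * ‖pm‖ + ct * (Bg0 * Lg + Bg1 ^ 2)) + 1)
    (σ' : ℝ) (hσ' : σ' = σ / Real.sqrt Lψ)
    -- the inexact solution (z, v, ε) of the prox subproblem
    (z : E) (v : E) (ε : ℝ) (hε : 0 ≤ ε)
    (hv : v ∈ epsSubdiff H
      (fun u => lam * AugLag K f h g ct u pm + (1 / 2) * ‖u - zm‖ ^ 2) ε z)
    (hvineq : ‖v‖ ^ 2 + 2 * ε ≤ σ' ^ 2 * ‖v + zm - z‖ ^ 2)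
    -- multiplier update, boundedness of multipliers
    (p : F) (hp : IsProjOn (dualCone K) (pm + ct • g z) p)
    (C : ℝ) (hpC : ‖p‖ ≤ C) (hpmC : ‖pm‖ ≤ C) :
    -- conclusion
    AugLag K f h g ct z p ≤
      sInf ((fun u => f u + h u) '' {u | u ∈ H ∧ g u ∈ -K}) + Dh ^ 2 / lam + 4 * C ^ 2 / ct := by
  have hLψ1 : 1 ≤ Lψ := by
    have hBg0nn : 0 ≤ Bg0 := (norm_nonneg _).trans (hBg0 zm hzm)
    rw [hLψ, le_add_iff_nonneg_left]
    exact mul_nonneg hlam.le (by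
      nlinarith [mul_nonneg hLg.le (norm_nonneg pm), mul_nonneg hBg0nn hLg.le, sq_nonneg Bg1])
  have hσ'sq : σ' ^ 2 ≤ 1 / 2 := hσ' ▸ div_sqrt_sq_le_half hσ0.le hσ1 hLψ1
  have hvineq' : ‖v‖ ^ 2 + 2 * ε ≤ 1 / 2 * ‖v + zm - z‖ ^ 2 :=
    hvineq.trans (mul_le_mul_of_nonneg_right hσ'sq (sq_nonneg _))
  obtain ⟨Kc, rfl⟩ := exists_properCone_coe_eq hKne hKcl hKcvx hKcone
  have hshift := augLag_le_augLag_add_of_infDist_eq_norm (f := f) (h := h) hct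
    (infDist_neg_eq_norm_of_isProjOn_dualCone Kc hp) hpC hpmC
  suffices ∀ u ∈ H, g u ∈ -(Kc : Set F) →
      AugLag Kc f h g ct z pm ≤ f u + h u + Dh ^ 2 / lam by
    have := le_csInf (hFne.image _) (by
      rintro _ ⟨u, ⟨huH, huK⟩, rfl⟩
      exact sub_le_iff_le_add.2 (this u huH huK))
    linarith
  intro u huH huK
  have hprox := le_add_sq_of_mem_epsSubdiff hv hvineq' hε huH (hDh u huH zm hzm)
  have hfeas := augLag_le_of_mem_neg (f := f) (h := h) hKcone hct huK pm
  rw [← sub_le_iff_le_add', le_div_iff₀ hlam]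
  nlinarith

/-- upper bound on the augmented Lagrangian at the iterate produced by one
NL-IAPIAL prox step, when the multipliers are bounded (Lemma 4.5 of the paper).
`φ* = inf {f(u) + h(u) : u ∈ F}` where `F = {z ∈ H : g(z) ∈ −K}` is the feasible set. -/
theorem auglag_upper_bound
    {E F : Type*}
    [NormedAddCommGroup E] [InnerProductSpace ℝ E] [FiniteDimensional ℝ E]
    [NormedAddCommGroup F] [InnerProductSpace ℝ F] [FiniteDimensional ℝ F]
    -- K is a nonempty closed convex cone
    (K : Set F) (hKne : K.Nonempty) (hKcl : IsClosed K) (hKcvx : Convex ℝ K)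
    (hKcone : ∀ t : ℝ, 0 < t → ∀ x ∈ K, t • x ∈ K)
    -- (B1): h proper closed convex, K_h-Lipschitz on its compact domain H of diameter ≤ Dh
    (H : Set E) (h : E → ℝ) (Kh Dh : ℝ) (hKh : 0 < Kh) (hDh0 : 0 < Dh)
    (hHne : H.Nonempty) (hHcpt : IsCompact H) (hHcvx : Convex ℝ H)
    (hhcvx : ConvexOn ℝ H h)
    (hhlip : ∀ x ∈ H, ∀ y ∈ H, |h x - h y| ≤ Kh * ‖x - y‖)
    (hDh : ∀ x ∈ H, ∀ y ∈ H, ‖x - y‖ ≤ Dh)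
    -- (B2): f differentiable on H with lower curvature m_f and L_f-Lipschitz gradient
    (f : E → ℝ) (f' : E → E) (mf Lf : ℝ) (hmf : 0 < mf) (hLf : 0 < Lf)
    (hfdiff : ∀ z ∈ H, HasGradientAt f (f' z) z)
    (hflow : ∀ z ∈ H, ∀ z' ∈ H, -(mf / 2) * ‖z' - z‖ ^ 2 ≤ f z' - f z - ⟪f' z, z' - z⟫)
    (hflip : ∀ z ∈ H, ∀ z' ∈ H, ‖f' z' - f' z‖ ≤ Lf * ‖z' - z‖)
    -- (B3): g K-convex and differentiable with L_g-Lipschitz derivative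
    (g : E → F) (g' : E → (E →L[ℝ] F)) (Lg : ℝ) (hLg : 0 < Lg)
    (hgdiff : ∀ z, HasFDerivAt g (g' z) z) (hgK : KConvex K g)
    (hglip : ∀ z z' : E, ‖g' z' - g' z‖ ≤ Lg * ‖z' - z‖)
    -- bounds B_g⁽⁰⁾ and B_g⁽¹⁾
    (Bg0 Bg1 : ℝ) (hBg0 : ∀ z ∈ H, ‖g z‖ ≤ Bg0) (hBg1 : ∀ z ∈ H, ‖g' z‖ ≤ Bg1)
    -- the feasible set is nonempty
    (hFne : {u | u ∈ H ∧ g u ∈ -K}.Nonempty)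
    -- data of the prox subproblem
    (lam σ ct : ℝ) (hlam : 0 < lam) (hσ0 : 0 < σ) (hσ1 : σ ≤ 1 / Real.sqrt 2) (hct : 0 < ct)
    (zm : E) (hzm : zm ∈ H) (pm : F)
    (Lψ : ℝ) (hLψ : Lψ = lam * (Lf + Lg * ‖pm‖ + ct * (Bg0 * Lg + Bg1 ^ 2)) + 1)
    (σ' : ℝ) (hσ' : σ' = σ / Real.sqrt Lψ)
    -- the inexact solution (z, v, ε) of the prox subproblem
    (z : E) (hz : z ∈ H) (v : E) (ε : ℝ) (hε : 0 ≤ ε)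
    (hv : v ∈ epsSubdiff H
      (fun u => lam * AugLag K f h g ct u pm + (1 / 2) * ‖u - zm‖ ^ 2) ε z)
    (hvineq : ‖v‖ ^ 2 + 2 * ε ≤ σ' ^ 2 * ‖v + zm - z‖ ^ 2)
    -- multiplier update, boundedness of multipliers
    (p : F) (hp : IsProjOn (dualCone K) (pm + ct • g z) p)
    (C : ℝ) (hC : 0 ≤ C) (hpC : ‖p‖ ≤ C) (hpmC : ‖pm‖ ≤ C) :
    -- conclusion
    AugLag K f h g ct z p ≤
      sInf ((fun u => f u + h u) '' {u | u ∈ H ∧ g u ∈ -K}) + Dh ^ 2 / lam + 4 * C ^ 2 / ct :=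
  auglag_upper_bound_general K hKne hKcl hKcvx hKcone H h Dh hDh f Lf hLf g Lg hLg Bg0 Bg1 hBg0 hFne
    lam σ ct hlam hσ0 hσ1 hct zm hzm pm Lψ hLψ σ' hσ' z v ε hε hv hvineq p hp C hpC hpmC
end
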